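/- (Lemma 3.6, case (4,12).) For all nonnegative integers r and s, there exists a solution to HWP*(12; 4^r, 12^s) if and only if r + s = 11. -/

import Mathlib

/-- A solution to the directed Hamilton–Waterloo problem HWP*(v; m^r, n^s):
a family of `r + s` permutations of `Fin v`, the first `r` of which are
fixed-point-free with all cycles of length `m` (i.e. every point has minimal
period `m`), the last `s` fixed-point-free with all cycles of length `n`,
such that for every ordered pair of distinct vertices `(x, y)` there is exactly
one index `i` with `σ i x = y`. -/
def HWPStarSolution (v m n r s : ℕ) : Prop :=
  ∃ σ : Fin (r + s) → Equiv.Perm (Fin v),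
    (∀ i : Fin (r + s), (i : ℕ) < r → ∀ x : Fin v, Function.minimalPeriod ⇑(σ i) x = m) ∧
    (∀ i : Fin (r + s), r ≤ (i : ℕ) → ∀ x : Fin v, Function.minimalPeriod ⇑(σ i) x = n) ∧
    (∀ x y : Fin v, x ≠ y → ∃! i : Fin (r + s), σ i x = y)

/-!
At a vertex `x`, the out-neighbours `σ i x` of a solution are exactly the other `v - 1` vertices,
each met once, so `r + s = v - 1`. Conversely, once `r + s = v - 1` and the factors are
fixed-point-free, uniqueness in the covering condition comes for free by the same count, so a
solution only has to be checked to reach every arc. For `v = 12` we exhibit one solution for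
each `r`, found by computer, and check the arcs by evaluation.
-/

open Function Equiv

theorem Equiv.minimalPeriod_permCongr {α β : Type*} (e : α ≃ β) (f : Perm α) (x : β) :
    minimalPeriod (e.permCongr f) x = minimalPeriod f (e.symm x) := by
  have hsemi : Semiconj e f (e.permCongr f) := fun y => by simp [permCongr_apply]
  have hsemi' : Semiconj e.symm (e.permCongr f) f := fun y => by simp [permCongr_apply]
  refine minimalPeriod_eq_minimalPeriod_iff.mpr fun n => ⟨fun h => h.map hsemi', fun h => ?_⟩
  simpa using h.map hsemi

open Fin.NatCast in
theorem iterate_finRotate_apply {n : ℕ} [NeZero n] (k : ℕ) (i : Fin n) :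
    (finRotate n)^[k] i = i + (k : Fin n) := by
  induction k with
  | zero => simp
  | succ k ih => rw [iterate_succ_apply', ih, finRotate_apply, Nat.cast_succ, add_assoc]

open Fin.NatCast in
theorem minimalPeriod_finRotate {n : ℕ} (i : Fin n) : minimalPeriod (finRotate n) i = n := by
  have : NeZero n := ⟨by rintro rfl; exact i.elim0⟩
  refine Nat.dvd_right_iff_eq.mp fun k => ?_
  rw [← isPeriodicPt_iff_minimalPeriod_dvd, IsPeriodicPt, IsFixedPt, iterate_finRotate_apply,
    add_eq_left, Fin.natCast_eq_zero]

/-- The permutation of `Fin (p * m)` that rotates each of the `p` blocks of `m` consecutive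
elements one step forward. -/
def blockRotate (p m : ℕ) : Perm (Fin (p * m)) :=
  finProdFinEquiv.permCongr ((Equiv.refl (Fin p)).prodCongr (finRotate m))

theorem minimalPeriod_blockRotate (p m : ℕ) (j : Fin (p * m)) :
    minimalPeriod (blockRotate p m) j = m := by
  rw [blockRotate, Equiv.minimalPeriod_permCongr]
  simp [Equiv.prodCongr_apply, minimalPeriod_prodMap, minimalPeriod_finRotate]

section
variable {ι α : Type*} {f : ι → α} {x : α}

theorem bijective_codRestrict_ne_iff (hf : ∀ i, x ≠ f i) :
    Bijective (fun i => (⟨f i, hf i⟩ : {y // x ≠ y})) ↔ ∀ y, x ≠ y → ∃! i, f i = y := by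
  simp [bijective_iff_existsUnique, Subtype.ext_iff]

variable [Fintype ι] [Fintype α] [DecidableEq α]

theorem card_subtype_ne_add_one (x : α) : Fintype.card {y // x ≠ y} + 1 = Fintype.card α := by
  rw [Fintype.card_subtype_compl (x = ·), Fintype.card_subtype_eq']
  have := Fintype.card_pos_iff.mpr ⟨x⟩
  omega

theorem card_add_one_eq_of_existsUnique (hf : ∀ i, x ≠ f i)
    (h : ∀ y, x ≠ y → ∃! i, f i = y) : Fintype.card ι + 1 = Fintype.card α := by
  rw [Fintype.card_of_bijective ((bijective_codRestrict_ne_iff hf).mpr h),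
    card_subtype_ne_add_one]

theorem existsUnique_of_exists_of_card (hf : ∀ i, x ≠ f i)
    (hcard : Fintype.card ι + 1 = Fintype.card α) (h : ∀ y, x ≠ y → ∃ i, f i = y) :
    ∀ y, x ≠ y → ∃! i, f i = y := by
  refine (bijective_codRestrict_ne_iff hf).mp ((Fintype.bijective_iff_surjective_and_card _).mpr
    ⟨fun y => ?_, ?_⟩)
  · obtain ⟨i, hi⟩ := h y y.2
    exact ⟨i, Subtype.ext hi⟩
  · have := card_subtype_ne_add_one x
    omega

end

namespace HWPStarSolution

variable {v m n r s : ℕ} {σ : Fin (r + s) → Perm (Fin v)}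

theorem apply_ne_self (hm : m ≠ 1) (hn : n ≠ 1)
    (hσm : ∀ i : Fin (r + s), (i : ℕ) < r → ∀ x, minimalPeriod (σ i) x = m)
    (hσn : ∀ i : Fin (r + s), r ≤ (i : ℕ) → ∀ x, minimalPeriod (σ i) x = n)
    (i : Fin (r + s)) (x : Fin v) : σ i x ≠ x := by
  intro hx
  have hone := minimalPeriod_eq_one_iff_isFixedPt.mpr hx
  rcases lt_or_ge (i : ℕ) r with hi | hi
  · exact hm (hσm i hi x ▸ hone)
  · exact hn (hσn i hi x ▸ hone)

theorem add_add_one_eq (h : HWPStarSolution v m n r s) (hv : 0 < v) (hm : m ≠ 1) (hn : n ≠ 1) :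
    r + s + 1 = v := by
  obtain ⟨σ, hσm, hσn, hcover⟩ := h
  let x : Fin v := ⟨0, hv⟩
  have hfree i : x ≠ σ i x := (apply_ne_self hm hn hσm hσn i x).symm
  simpa using card_add_one_eq_of_existsUnique hfree (hcover x)

theorem of_forall_exists (hm : m ≠ 1) (hn : n ≠ 1) (hv : r + s + 1 = v)
    (hσm : ∀ i : Fin (r + s), (i : ℕ) < r → ∀ x, minimalPeriod (σ i) x = m)
    (hσn : ∀ i : Fin (r + s), r ≤ (i : ℕ) → ∀ x, minimalPeriod (σ i) x = n)
    (hcover : ∀ x y, x ≠ y → ∃ i, σ i x = y) : HWPStarSolution v m n r s :=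
  ⟨σ, hσm, hσn, fun x => existsUnique_of_exists_of_card
    (fun i => (apply_ne_self hm hn hσm hσn i x).symm) (by simpa using hv) (hcover x)⟩

end HWPStarSolution

/-- Row `i` of `hwp12Ordering r` lists the vertices of the `i`-th factor of a solution to
HWP*(12; 4^r, 12^(11-r)) cycle after cycle: three 4-cycles if `i < r`, one 12-cycle otherwise. -/
def hwp12Ordering : Fin 12 → Fin 11 → Fin 12 → Fin 12 := ![
  ![![0, 9, 2, 11, 4, 6, 3, 8, 10, 7, 5, 1],
    ![0, 11, 7, 3, 6, 1, 2, 8, 9, 10, 5, 4],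
    ![0, 7, 11, 1, 10, 8, 6, 2, 4, 9, 3, 5],
    ![0, 1, 6, 4, 5, 9, 7, 10, 3, 11, 8, 2],
    ![0, 10, 4, 2, 6, 11, 9, 1, 5, 7, 8, 3],
    ![0, 8, 1, 3, 10, 11, 5, 2, 9, 4, 7, 6],
    ![0, 4, 3, 9, 5, 10, 6, 8, 7, 2, 1, 11],
    ![0, 5, 8, 4, 1, 9, 11, 6, 10, 2, 3, 7],
    ![0, 2, 10, 9, 6, 5, 11, 3, 1, 7, 4, 8],
    ![0, 3, 4, 10, 1, 8, 11, 2, 5, 6, 7, 9],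
    ![0, 6, 9, 8, 5, 3, 2, 7, 1, 4, 11, 10]],
  ![![0, 8, 1, 10,  2, 6, 7, 9,  3, 5, 4, 11],
    ![0, 2, 1, 5, 8, 7, 3, 6, 9, 11, 10, 4],
    ![0, 11, 2, 7, 10, 8, 4, 1, 9, 6, 5, 3],
    ![0, 3, 10, 9, 5, 1, 2, 4, 6, 11, 7, 8],
    ![0, 7, 11, 4, 8, 6, 1, 3, 2, 10, 5, 9],
    ![0, 1, 7, 4, 10, 11, 5, 6, 3, 9, 8, 2],
    ![0, 4, 5, 11, 1, 8, 9, 10, 2, 3, 7, 6],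
    ![0, 6, 10, 3, 11, 8, 5, 2, 9, 1, 4, 7],
    ![0, 9, 4, 3, 8, 11, 6, 2, 5, 10, 7, 1],
    ![0, 5, 7, 2, 8, 10, 6, 4, 9, 3, 1, 11],
    ![0, 10, 1, 6, 8, 3, 4, 2, 11, 9, 7, 5]],
  ![![0, 3, 8, 6,  1, 9, 11, 7,  2, 10, 5, 4],
    ![0, 5, 10, 11,  1, 6, 2, 8,  3, 4, 9, 7],
    ![0, 8, 9, 3, 1, 10, 7, 6, 5, 11, 2, 4],
    ![0, 9, 8, 10, 6, 1, 4, 7, 5, 2, 11, 3],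
    ![0, 4, 6, 7, 2, 5, 3, 11, 10, 9, 1, 8],
    ![0, 6, 4, 3, 5, 9, 2, 7, 10, 8, 11, 1],
    ![0, 7, 11, 6, 10, 3, 9, 5, 8, 4, 1, 2],
    ![0, 1, 7, 8, 3, 2, 6, 11, 9, 10, 4, 5],
    ![0, 10, 1, 5, 6, 9, 4, 11, 8, 2, 3, 7],
    ![0, 11, 5, 1, 3, 6, 8, 7, 4, 10, 2, 9],
    ![0, 2, 1, 11, 4, 8, 5, 7, 9, 6, 3, 10]],
  ![![0, 10, 3, 5,  1, 6, 2, 9,  4, 11, 7, 8],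
    ![0, 8, 3, 6,  1, 2, 11, 10,  4, 7, 9, 5],
    ![0, 5, 7, 1,  2, 8, 9, 4,  3, 10, 6, 11],
    ![0, 4, 9, 8, 1, 3, 7, 6, 5, 11, 2, 10],
    ![0, 11, 4, 5, 6, 3, 2, 1, 8, 10, 9, 7],
    ![0, 2, 7, 3, 11, 5, 8, 6, 10, 4, 1, 9],
    ![0, 9, 3, 1, 11, 6, 4, 10, 8, 7, 5, 2],
    ![0, 7, 10, 11, 8, 2, 5, 9, 6, 1, 4, 3],
    ![0, 6, 9, 10, 2, 3, 4, 8, 5, 1, 7, 11],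
    ![0, 3, 9, 11, 1, 5, 10, 7, 2, 4, 6, 8],
    ![0, 1, 10, 5, 3, 8, 11, 9, 2, 6, 7, 4]],
  ![![0, 9, 1, 7,  2, 10, 6, 8,  3, 5, 4, 11],
    ![0, 5, 10, 1,  2, 4, 7, 6,  3, 8, 11, 9],
    ![0, 3, 2, 8,  1, 6, 5, 11,  4, 10, 9, 7],
    ![0, 2, 11, 6,  1, 5, 8, 7,  3, 9, 10, 4],
    ![0, 11, 4, 5, 9, 2, 7, 10, 8, 6, 1, 3],
    ![0, 8, 5, 7, 9, 11, 2, 3, 1, 4, 6, 10],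
    ![0, 10, 3, 11, 5, 2, 6, 7, 8, 4, 1, 9],
    ![0, 7, 5, 6, 4, 9, 8, 3, 10, 2, 1, 11],
    ![0, 4, 8, 1, 2, 9, 6, 3, 7, 11, 10, 5],
    ![0, 1, 8, 10, 11, 7, 2, 5, 3, 6, 9, 4],
    ![0, 6, 11, 8, 9, 5, 1, 10, 7, 3, 4, 2]],
  ![![0, 2, 8, 4,  1, 10, 11, 3,  5, 6, 7, 9],
    ![0, 4, 10, 9,  1, 5, 3, 2,  6, 11, 7, 8],
    ![0, 7, 5, 10,  1, 3, 11, 4,  2, 6, 9, 8],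
    ![0, 1, 4, 8,  2, 7, 3, 10,  5, 9, 11, 6],
    ![0, 11, 2, 3,  1, 8, 7, 6,  4, 9, 10, 5],
    ![0, 5, 11, 8, 9, 1, 7, 4, 2, 10, 3, 6],
    ![0, 6, 10, 1, 11, 5, 8, 3, 9, 2, 4, 7],
    ![0, 8, 1, 9, 6, 3, 7, 2, 11, 10, 4, 5],
    ![0, 9, 7, 10, 8, 11, 1, 6, 4, 3, 5, 2],
    ![0, 3, 8, 10, 7, 11, 9, 4, 6, 2, 5, 1],
    ![0, 10, 6, 8, 5, 7, 1, 2, 9, 3, 4, 11]],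
  ![![0, 4, 1, 7,  2, 8, 11, 6,  3, 10, 5, 9],
    ![0, 8, 4, 10,  1, 6, 3, 5,  2, 11, 7, 9],
    ![0, 10, 8, 2,  1, 5, 6, 9,  3, 11, 4, 7],
    ![0, 6, 5, 8,  1, 10, 3, 2,  4, 11, 9, 7],
    ![0, 2, 9, 4,  1, 3, 8, 7,  5, 10, 6, 11],
    ![0, 7, 5, 3,  1, 8, 9, 11,  2, 4, 6, 10],
    ![0, 1, 11, 8, 5, 2, 7, 10, 4, 3, 9, 6],
    ![0, 11, 3, 1, 4, 8, 6, 7, 2, 10, 9, 5],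
    ![0, 5, 4, 2, 6, 8, 3, 7, 11, 10, 1, 9],
    ![0, 3, 6, 4, 9, 10, 11, 2, 5, 7, 8, 1],
    ![0, 9, 8, 10, 7, 6, 1, 2, 3, 4, 5, 11]],
  ![![0, 6, 5, 11,  1, 2, 10, 8,  3, 9, 4, 7],
    ![0, 2, 11, 9,  1, 6, 8, 4,  3, 5, 7, 10],
    ![0, 10, 1, 4,  2, 7, 11, 5,  3, 6, 9, 8],
    ![0, 8, 9, 3,  1, 10, 2, 6,  4, 11, 7, 5],
    ![0, 7, 4, 6,  1, 9, 2, 3,  5, 8, 11, 10],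
    ![0, 11, 8, 2,  1, 7, 9, 5,  3, 10, 6, 4],
    ![0, 1, 8, 10,  2, 5, 3, 7,  4, 9, 6, 11],
    ![0, 9, 11, 1, 3, 8, 6, 2, 4, 5, 10, 7],
    ![0, 5, 6, 3, 4, 10, 9, 7, 1, 11, 2, 8],
    ![0, 3, 11, 6, 7, 8, 5, 9, 10, 4, 2, 1],
    ![0, 4, 8, 7, 6, 10, 11, 3, 2, 9, 1, 5]],
  ![![0, 7, 4, 6,  1, 5, 8, 2,  3, 10, 9, 11],
    ![0, 3, 9, 7,  1, 11, 8, 10,  2, 5, 6, 4],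
    ![0, 4, 3, 8,  1, 9, 5, 7,  2, 11, 10, 6],
    ![0, 8, 5, 9,  1, 10, 7, 6,  2, 3, 4, 11],
    ![0, 9, 2, 4,  1, 7, 11, 5,  3, 6, 10, 8],
    ![0, 5, 2, 10,  1, 6, 11, 4,  3, 7, 8, 9],
    ![0, 6, 7, 3,  1, 2, 8, 11,  4, 9, 10, 5],
    ![0, 10, 3, 1,  2, 6, 8, 7,  4, 5, 11, 9],
    ![0, 2, 9, 8, 1, 4, 7, 10, 11, 6, 3, 5],
    ![0, 11, 7, 5, 10, 4, 8, 6, 9, 1, 3, 2],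
    ![0, 1, 8, 4, 10, 2, 7, 9, 6, 5, 3, 11]],
  ![![0, 8, 10, 1,  2, 5, 6, 9,  3, 11, 7, 4],
    ![0, 1, 5, 10,  2, 8, 9, 11,  3, 4, 6, 7],
    ![0, 11, 8, 4,  1, 10, 7, 5,  2, 9, 3, 6],
    ![0, 6, 11, 5,  1, 8, 3, 7,  2, 4, 9, 10],
    ![0, 4, 11, 3,  1, 6, 5, 2,  7, 10, 9, 8],
    ![0, 10, 3, 8,  1, 4, 2, 6,  5, 7, 11, 9],
    ![0, 9, 1, 2,  3, 10, 11, 6,  4, 7, 8, 5],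
    ![0, 2, 7, 6,  1, 3, 9, 4,  5, 8, 11, 10],
    ![0, 3, 5, 9,  1, 7, 2, 11,  4, 8, 6, 10],
    ![0, 7, 9, 6, 4, 5, 3, 2, 10, 8, 1, 11],
    ![0, 5, 11, 4, 10, 6, 8, 2, 3, 1, 9, 7]],
  ![![0, 1, 4, 2,  3, 6, 10, 5,  7, 9, 8, 11],
    ![0, 4, 9, 7,  1, 11, 8, 5,  2, 10, 6, 3],
    ![0, 5, 2, 4,  1, 6, 7, 10,  3, 8, 9, 11],
    ![0, 9, 2, 3,  1, 5, 7, 11,  4, 10, 8, 6],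
    ![0, 6, 2, 5,  1, 8, 3, 7,  4, 11, 10, 9],
    ![0, 10, 11, 6,  1, 2, 7, 8,  3, 9, 5, 4],
    ![0, 11, 2, 1,  3, 4, 5, 9,  6, 8, 10, 7],
    ![0, 2, 6, 11,  1, 9, 10, 4,  3, 5, 8, 7],
    ![0, 3, 1, 10,  2, 8, 4, 7,  5, 11, 9, 6],
    ![0, 8, 2, 9,  1, 7, 4, 6,  3, 11, 5, 10],
    ![0, 7, 5, 6, 9, 1, 3, 10, 2, 11, 4, 8]],
  ![![0, 11, 7, 3,  1, 9, 6, 8,  2, 4, 10, 5],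
    ![0, 4, 1, 11,  2, 8, 10, 9,  3, 6, 7, 5],
    ![0, 8, 11, 4,  1, 7, 10, 3,  2, 9, 5, 6],
    ![0, 10, 7, 9,  1, 4, 6, 11,  2, 5, 8, 3],
    ![0, 1, 3, 7,  2, 11, 9, 8,  4, 5, 10, 6],
    ![0, 2, 1, 8,  3, 11, 5, 9,  4, 7, 6, 10],
    ![0, 6, 1, 2,  3, 9, 10, 11,  4, 8, 5, 7],
    ![0, 7, 1, 10,  2, 3, 5, 4,  6, 9, 11, 8],
    ![0, 5, 1, 6,  2, 7, 11, 10,  3, 8, 9, 4],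
    ![0, 3, 10, 1,  2, 6, 5, 11,  4, 9, 7, 8],
    ![0, 9, 1, 5,  2, 10, 8, 7,  3, 4, 11, 6]]]

theorem hwp12Ordering_injective (r : Fin 12) (i : Fin 11) : Injective (hwp12Ordering r i) := by
  revert r i
  decide +kernel

def hwp12Succ (r : Fin 12) (i : Fin 11) : Perm (Fin 12) :=
  if (i : ℕ) < r then blockRotate 3 4 else blockRotate 1 12

theorem hwp12Ordering_cover (r : Fin 12) (x y : Fin 12) (hxy : x ≠ y) :
    ∃ i j, hwp12Ordering r i j = x ∧ hwp12Ordering r i (hwp12Succ r i j) = y := by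
  revert r x y
  decide +kernel

noncomputable def hwp12Factor (r : Fin 12) (i : Fin 11) : Perm (Fin 12) :=
  (Equiv.ofBijective _ (hwp12Ordering_injective r i).bijective_of_finite).permCongr (hwp12Succ r i)

theorem hwp12Factor_apply_hwp12Ordering (r : Fin 12) (i : Fin 11) (j : Fin 12) :
    hwp12Factor r i (hwp12Ordering r i j) = hwp12Ordering r i (hwp12Succ r i j) := by
  rw [hwp12Factor, permCongr_apply, ofBijective_symm_apply_apply, ofBijective_apply]

theorem minimalPeriod_hwp12Factor (r : Fin 12) (i : Fin 11) (x : Fin 12) :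
    minimalPeriod (hwp12Factor r i) x = if (i : ℕ) < r then 4 else 12 := by
  rw [hwp12Factor, Equiv.minimalPeriod_permCongr, hwp12Succ]
  split_ifs
  exacts [minimalPeriod_blockRotate 3 4 _, minimalPeriod_blockRotate 1 12 _]

theorem hwpStarSolution_12_4_12_of_le {r : ℕ} (hr : r ≤ 11) :
    HWPStarSolution 12 4 12 r (11 - r) := by
  have hcast : r + (11 - r) = 11 := by omega
  let σ (i : Fin (r + (11 - r))) := hwp12Factor ⟨r, by omega⟩ (i.cast hcast)
  refine HWPStarSolution.of_forall_exists (σ := σ) (by norm_num) (by norm_num) (by omega)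
    (fun i hi x => ?_) (fun i hi x => ?_) fun x y hxy => ?_
  · simp [σ, minimalPeriod_hwp12Factor, hi]
  · simp [σ, minimalPeriod_hwp12Factor, not_lt.mpr hi]
  · obtain ⟨i, j, rfl, rfl⟩ := hwp12Ordering_cover ⟨r, by omega⟩ x y hxy
    exact ⟨i.cast hcast.symm, hwp12Factor_apply_hwp12Ordering _ _ _⟩

/-- HWP*(12; 4^r, 12^s) has a solution if and only if r + s = 11. -/
theorem hwpStar_12_4_12 (r s : ℕ) :
    HWPStarSolution 12 4 12 r s ↔ r + s = 11 := by
  refine ⟨fun h => ?_, fun h => ?_⟩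
  · have := h.add_add_one_eq (by norm_num) (by norm_num) (by norm_num)
    omega
  · obtain rfl : s = 11 - r := by omega
    exact hwpStarSolution_12_4_12_of_le (by omega)
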